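/- Let k be a field, n ≥ 1 an integer, and f = (f_1,…,f_n) ∈ Aut_k(A^n) an automorphism fixing the origin, i.e. f(0,…,0) = (0,…,0). Write each f_i = f_{i,1} + f_{i,2} + ⋯ + f_{i,d}, where f_{i,j} ∈ k[x_1,…,x_n] is homogeneous of degree j. Then the n-tuple g = (g_1,…,g_n) with g_i = f_{i,1} + t·f_{i,2} + t²·f_{i,3} + ⋯ + t^{d−1}·f_{i,d} belongs to Aut_{k[t]}(A^n), equals the conjugate α^{−1}∘f∘α over k[t,1/t] where α = (t·x_1,…,t·x_n), and its specialization g(0) at t = 0 equals the linear part (f_{1,1},…,f_{n,1}) of f, which is an element of GL_n(k). -/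

import Mathlib

open MvPolynomial

/-- Endomorphisms of affine `n`-space over `R`: `n`-tuples of polynomials in
`R[x_1,…,x_n]`, with composition given by substitution. -/
def PolyEnd (R : Type*) [CommRing R] (n : ℕ) : Type _ := Fin n → MvPolynomial (Fin n) R

namespace PolyEnd

variable {R S : Type*} [CommRing R] [CommRing S] {n : ℕ}

noncomputable instance : Monoid (PolyEnd R n) where
  one := fun i => X i
  mul f g := fun i => bind₁ g (f i)
  mul_assoc f g h := funext fun i => by
    show bind₁ h (bind₁ g (f i)) = bind₁ (fun j => bind₁ h (g j)) (f i)
    exact bind₁_bind₁ g h (f i)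
  one_mul f := funext fun i => by
    show bind₁ f (X i) = f i
    exact bind₁_X_right f i
  mul_one f := funext fun i => by
    show bind₁ X (f i) = f i
    rw [bind₁_X_left, AlgHom.id_apply]

@[simp] lemma mul_apply (f g : PolyEnd R n) (i : Fin n) :
    (f * g) i = bind₁ g (f i) := rfl

@[simp] lemma one_apply (i : Fin n) : (1 : PolyEnd R n) i = X i := rfl

/-- The Jacobian determinant of an endomorphism. -/
noncomputable def jac (f : PolyEnd R n) : MvPolynomial (Fin n) R :=
  (Matrix.of fun i j => pderiv j (f i)).det

/-- The chain rule for partial derivatives of a substitution. -/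
lemma pderiv_bind₁ (g : Fin n → MvPolynomial (Fin n) R)
    (p : MvPolynomial (Fin n) R) (j : Fin n) :
    pderiv j (bind₁ g p) = ∑ i, bind₁ g (pderiv i p) * pderiv j (g i) := by
  induction p using MvPolynomial.induction_on with
  | C a => simp
  | add p q hp hq => simp [hp, hq, Finset.sum_add_distrib, add_mul]
  | mul_X p i hp =>
      rw [map_mul, bind₁_X_right, pderiv_mul, hp]
      have key : ∀ l : Fin n, bind₁ g (pderiv l (p * X i)) * pderiv j (g l)
          = bind₁ g (pderiv l p) * pderiv j (g l) * g i
            + (if l = i then bind₁ g p * pderiv j (g i) else 0) := by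
        intro l
        rw [pderiv_mul, pderiv_X]
        by_cases h : l = i
        · subst h
          simp only [Pi.single_apply, if_pos rfl, map_add, map_mul, bind₁_X_right,
            bind₁_C_right, if_pos rfl]
          ring_nf
          simp [mul_comm, mul_left_comm, mul_assoc]
        · simp only [Pi.single_apply, if_neg (Ne.symm h), if_neg h, mul_zero, map_mul,
            map_add, map_zero, add_zero, bind₁_X_right]
          ring
      rw [Finset.sum_congr rfl fun l _ => key l, Finset.sum_add_distrib]
      simp [Finset.sum_mul]

lemma jac_one : jac (1 : PolyEnd R n) = 1 := by
  unfold jac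
  have : (Matrix.of fun i j => pderiv j ((1 : PolyEnd R n) i))
      = (1 : Matrix (Fin n) (Fin n) (MvPolynomial (Fin n) R)) := by
    ext i j
    simp [Matrix.one_apply, pderiv_X, Pi.single_apply, eq_comm]
  rw [this, Matrix.det_one]

/-- The chain rule for Jacobians. -/
lemma jac_mul (f g : PolyEnd R n) : jac (f * g) = bind₁ g (jac f) * jac g := by
  unfold jac
  have : (Matrix.of fun i j => pderiv j ((f * g) i))
      = (Matrix.of fun i l => pderiv l (f i)).map (bind₁ g)
        * (Matrix.of fun l j => pderiv j (g l)) := by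
    ext i j
    simp [Matrix.mul_apply]
    exact congrArg (coeff _) (pderiv_bind₁ g (f i) j)
  rw [this, Matrix.det_mul]
  congr 1
  exact ((bind₁ g).map_det (Matrix.of fun i l => pderiv l (f i))).symm

end PolyEnd

/-- Automorphisms of affine `n`-space over `R` : endomorphisms admitting a two-sided
compositional inverse. -/
abbrev PolyAut (R : Type*) [CommRing R] (n : ℕ) := (PolyEnd R n)ˣ

namespace PolyAut

variable {R S : Type*} [CommRing R] [CommRing S] {n : ℕ}

lemma bind₁_val_injective (f : PolyAut R n) :
    Function.Injective (bind₁ (σ := Fin n) (f.val : Fin n → MvPolynomial (Fin n) R)) := by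
  intro p q h
  have hinv : ∀ r : MvPolynomial (Fin n) R, bind₁ (f.inv : Fin n → _) (bind₁ (f.val : Fin n → _) r) = r := by
    intro r
    refine (bind₁_bind₁ _ _ r).trans ?_
    have : (fun i => bind₁ (f.inv : Fin n → _) ((f.val : Fin n → _) i)) = (f.val * f.inv : PolyEnd R n) := rfl
    rw [this, f.val_inv]
    show bind₁ (fun i => X i) r = r
    rw [show (fun i : Fin n => (X i : MvPolynomial (Fin n) R)) = X from rfl,
      bind₁_X_left, AlgHom.id_apply]
  calc p = bind₁ (f.inv : Fin n → _) (bind₁ (f.val : Fin n → _) p) := (hinv p).symm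
    _ = bind₁ (f.inv : Fin n → _) (bind₁ (f.val : Fin n → _) q) := by rw [h]
    _ = q := hinv q

end PolyAut

/-- The subgroup of automorphisms of Jacobian `1`. -/
noncomputable def SAutGrp (R : Type*) [CommRing R] (n : ℕ) : Subgroup (PolyAut R n) where
  carrier := {f | PolyEnd.jac f.val = 1}
  one_mem' := PolyEnd.jac_one
  mul_mem' := by
    intro f g hf hg
    show PolyEnd.jac (f.val * g.val) = 1
    rw [PolyEnd.jac_mul, hf, hg, map_one, one_mul]
  inv_mem' := by
    intro f hf
    show PolyEnd.jac f.inv = 1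
    apply PolyAut.bind₁_val_injective f
    have h1 : PolyEnd.jac (f.inv * f.val) = 1 := by
      rw [f.inv_val]; exact PolyEnd.jac_one
    rw [PolyEnd.jac_mul, hf, mul_one] at h1
    rw [map_one]
    exact h1

lemma mem_SAutGrp_iff {R : Type*} [CommRing R] {n : ℕ} (f : PolyAut R n) :
    f ∈ SAutGrp R n ↔ PolyEnd.jac f.val = 1 := Iff.rfl

section Translations

variable {R : Type*} [CommRing R] {n : ℕ}

/-- The translation endomorphism `(x_1 + c_1, …, x_n + c_n)`. -/
noncomputable def translEnd (c : Fin n → R) : PolyEnd R n := fun i => X i + C (c i)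

lemma translEnd_mul (c d : Fin n → R) :
    translEnd c * translEnd d = translEnd (c + d) := by
  funext i
  show bind₁ (translEnd d) (translEnd c i) = translEnd (c + d) i
  simp only [translEnd, map_add, bind₁_C_right]
  rw [show bind₁ (translEnd d) (X i) = translEnd d i from bind₁_X_right _ i]
  rw [show bind₁ (translEnd d) (C (c i)) = C (c i) from bind₁_C_right _ _]
  show X i + C (d i) + C (c i) = X i + C (c i + d i)
  rw [map_add]; ring

lemma translEnd_zero : translEnd (0 : Fin n → R) = 1 := by
  funext i
  show X i + C 0 = X i
  simp

/-- The translation automorphism `(x_1 + c_1, …, x_n + c_n)`. -/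
noncomputable def transl (c : Fin n → R) : PolyAut R n where
  val := translEnd c
  inv := translEnd (-c)
  val_inv := by rw [translEnd_mul, add_neg_cancel, translEnd_zero]
  inv_val := by rw [translEnd_mul, neg_add_cancel, translEnd_zero]

@[simp] lemma transl_val (c : Fin n → R) : (transl c).val = translEnd c := rfl

lemma jac_translEnd (c : Fin n → R) : PolyEnd.jac (translEnd c) = 1 := by
  unfold PolyEnd.jac
  have : (Matrix.of fun i j => pderiv j (translEnd c i))
      = (1 : Matrix (Fin n) (Fin n) (MvPolynomial (Fin n) R)) := by
    ext i j
    simp [translEnd, Matrix.one_apply, pderiv_X, Pi.single_apply, eq_comm]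
  rw [this, Matrix.det_one]

lemma transl_mem_SAutGrp (c : Fin n → R) : transl c ∈ SAutGrp R n := jac_translEnd c

/-- The translation as element of `SAut`. -/
noncomputable def translS (c : Fin n → R) : ↥(SAutGrp R n) := ⟨transl c, transl_mem_SAutGrp c⟩

/-- `f` is a translation. -/
def IsTranslation (f : PolyAut R n) : Prop := ∃ c : Fin n → R, f = transl c

end Translations

section Linear

variable {R : Type*} [CommRing R] {n : ℕ}

/-- The linear endomorphism associated with a matrix. -/
noncomputable def linEnd (M : Matrix (Fin n) (Fin n) R) : PolyEnd R n :=
  fun i => ∑ j, C (M i j) * X j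

/-- `f` is a linear automorphism (i.e. in the image of `GL_n`). -/
def IsLinear (f : PolyAut R n) : Prop := ∃ M : Matrix (Fin n) (Fin n) R, f.val = linEnd M

/-- `f` is a linear automorphism given by a matrix of determinant 1
(i.e. in the image of `SL_n`). -/
def MemSL (f : PolyAut R n) : Prop :=
  ∃ M : Matrix (Fin n) (Fin n) R, M.det = 1 ∧ f.val = linEnd M

/-- `f` is a triangular automorphism. -/
def IsTriangular (f : PolyAut R n) : Prop :=
  ∃ (a : Fin n → Rˣ) (b : Fin n → MvPolynomial (Fin n) R),
    (∀ i : Fin n, b i ∈ MvPolynomial.supported R {j : Fin n | (j : ℕ) < (i : ℕ)}) ∧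
    ∀ i : Fin n, f.val i = C ((a i : R)) * X i + b i

/-- The tame subgroup, generated by linear and triangular automorphisms. -/
noncomputable def TameGrp (R : Type*) [CommRing R] (n : ℕ) : Subgroup (PolyAut R n) :=
  Subgroup.closure {f | IsLinear f ∨ IsTriangular f}

end Linear

section Map

variable {R S : Type*} [CommRing R] [CommRing S] {n : ℕ}

/-- Applying a ring homomorphism to all coefficients, as a monoid homomorphism of
endomorphisms of affine `n`-space. -/
noncomputable def endMapHom (φ : R →+* S) : PolyEnd R n →* PolyEnd S n where
  toFun f := fun i => MvPolynomial.map φ (f i)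
  map_one' := funext fun i => by
    show MvPolynomial.map φ (X i) = X i
    simp
  map_mul' f g := funext fun i => by
    show MvPolynomial.map φ (bind₁ g (f i)) = bind₁ (fun j => MvPolynomial.map φ (g j)) (MvPolynomial.map φ (f i))
    exact map_bind₁ ..

/-- Applying a ring homomorphism to all coefficients, on automorphisms. -/
noncomputable def autMap (φ : R →+* S) : PolyAut R n →* PolyAut S n :=
  Units.map (endMapHom φ)

lemma jac_endMapHom (φ : R →+* S) (f : PolyEnd R n) :
    PolyEnd.jac (endMapHom φ f) = MvPolynomial.map φ (PolyEnd.jac f) := by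
  unfold PolyEnd.jac
  have : (Matrix.of fun i j => pderiv j ((endMapHom φ f) i))
      = (Matrix.of fun i j => pderiv j (f i)).map (MvPolynomial.map φ) :=
    Matrix.ext fun i j => by
      simp only [Matrix.of_apply, Matrix.map_apply]
      exact pderiv_map
  rw [this, RingHom.map_det]
  rfl

/-- Specialisation of an automorphism over `R[t]` at a value `t₀ ∈ R`. -/
noncomputable def specAut (t0 : R) : PolyAut (Polynomial R) n →* PolyAut R n :=
  autMap (Polynomial.evalRingHom t0)

lemma specAut_mem_SAutGrp (h : PolyAut (Polynomial R) n)
    (hh : h ∈ SAutGrp (Polynomial R) n) (t0 : R) :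
    specAut t0 h ∈ SAutGrp R n := by
  show PolyEnd.jac ((specAut t0 h).val) = 1
  have : (specAut t0 h).val = endMapHom (Polynomial.evalRingHom t0) h.val := rfl
  rw [this, jac_endMapHom, hh, map_one]

/-- Specialisation, from `SAut` over `R[t]` to `SAut` over `R`. -/
noncomputable def specSAut (t0 : R) (h : PolyAut (Polynomial R) n)
    (hh : h ∈ SAutGrp (Polynomial R) n) : ↥(SAutGrp R n) :=
  ⟨specAut t0 h, specAut_mem_SAutGrp h hh t0⟩

/-- A subgroup `N` of `SAut_k(𝔸ⁿ)` is closed under specialisation if for every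
automorphism `h` over `k[t]` of Jacobian `1` all of whose specialisations at
`t₀ ≠ 0` lie in `N`, the specialisation at `0` also lies in `N`. Every subgroup
that is closed in the ind-topology has this property. -/
def ClosedUnderSpec {R : Type*} [CommRing R] {n : ℕ} (N : Subgroup ↥(SAutGrp R n)) : Prop :=
  ∀ (h : PolyAut (Polynomial R) n) (hh : h ∈ SAutGrp (Polynomial R) n),
    (∀ t0 : R, t0 ≠ 0 → specSAut t0 h hh ∈ N) → specSAut 0 h hh ∈ N

/-- A subgroup `N` of `Aut_k(𝔸ⁿ)` is closed under specialisation if for every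
automorphism `h` over `k[t]` all of whose specialisations at `t₀ ≠ 0` lie in `N`,
the specialisation at `0` also lies in `N`. -/
def ClosedUnderSpecAut {R : Type*} [CommRing R] {n : ℕ} (N : Subgroup (PolyAut R n)) : Prop :=
  ∀ h : PolyAut (Polynomial R) n,
    (∀ t0 : R, t0 ≠ 0 → specAut t0 h ∈ N) → specAut 0 h ∈ N

end Map

section ScaleT

variable (R : Type*) [CommRing R] (n : ℕ)

/-- The endomorphism `(T^m·x₁, …, T^m·xₙ)` over the Laurent polynomial ring. -/
noncomputable def scaleTEnd (m : ℤ) : PolyEnd (LaurentPolynomial R) n :=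
  fun i => MvPolynomial.C (LaurentPolynomial.T m) * X i

lemma scaleTEnd_mul (m m' : ℤ) :
    scaleTEnd R n m * scaleTEnd R n m' = scaleTEnd R n (m + m') := by
  funext i
  show bind₁ (scaleTEnd R n m') (scaleTEnd R n m i) = scaleTEnd R n (m + m') i
  unfold scaleTEnd
  rw [map_mul, bind₁_C_right, bind₁_X_right]
  rw [LaurentPolynomial.T_add, map_mul]
  ring

lemma scaleTEnd_zero : scaleTEnd R n 0 = 1 := by
  funext i
  show MvPolynomial.C (LaurentPolynomial.T 0) * X i = (1 : PolyEnd (LaurentPolynomial R) n) i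
  rw [LaurentPolynomial.T_zero, map_one, one_mul]
  rfl

/-- The automorphism `α = (t·x₁, …, t·xₙ)` over the Laurent polynomial ring `k[t,1/t]`. -/
noncomputable def scaleT : PolyAut (LaurentPolynomial R) n where
  val := scaleTEnd R n 1
  inv := scaleTEnd R n (-1)
  val_inv := by rw [scaleTEnd_mul]; norm_num [scaleTEnd_zero]
  inv_val := by rw [scaleTEnd_mul]; norm_num [scaleTEnd_zero]

end ScaleT

/-! Conjugation by `α = (t x₁, …, t xₙ)` multiplies the degree-`j` part of each coordinate
by `t ^ (j - 1)`. Hence `α⁻¹ ∘ f ∘ α` and `α⁻¹ ∘ f⁻¹ ∘ α` are already defined over `k[t]` as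
soon as `f` and `f⁻¹` have no constant terms (and `f⁻¹` fixes the origin because `f` does). As
`k[t] → k[t,1/t]` is injective, these two endomorphisms over `k[t]` are mutually inverse, and
setting `t = 0` kills all homogeneous parts of degree at least `2`. -/

section MvPolynomial

variable {R σ τ : Type*} [CommRing R]

lemma bind₁_C_mul_X_of_isHomogeneous (c : R) {m : ℕ} {p : MvPolynomial σ R}
    (hp : p.IsHomogeneous m) :
    bind₁ (fun l => C c * X l) p = C (c ^ m) * p := by
  conv_lhs => rw [p.as_sum]
  conv_rhs => rw [p.as_sum]
  rw [map_sum, Finset.mul_sum]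
  refine Finset.sum_congr rfl fun e he => ?_
  have hdeg : ∑ i ∈ e.support, e i = m := by
    by_contra h
    exact mem_support_iff.mp he (hp.coeff_eq_zero h)
  simp_rw [bind₁_monomial, monomial_eq, Finsupp.prod, mul_pow, Finset.prod_mul_distrib, ← C_pow,
    ← map_prod, Finset.prod_pow_eq_pow_sum, hdeg]
  ring

lemma sum_Icc_homogeneousComponent_of_constantCoeff_eq_zero {p : MvPolynomial σ R}
    (hp : constantCoeff p = 0) :
    ∑ j ∈ Finset.Icc 1 p.totalDegree, homogeneousComponent j p = p := by
  conv_rhs => rw [← sum_homogeneousComponent p]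
  rw [Finset.range_eq_Ico, Finset.sum_eq_sum_Ico_succ_bot (Nat.succ_pos _), zero_add,
    Nat.succ_eq_add_one, Finset.Ico_add_one_right_eq_Icc, homogeneousComponent_zero,
    ← constantCoeff_eq, hp, C_0, zero_add]

lemma constantCoeff_bind₁_of_constantCoeff_eq_zero {g : σ → MvPolynomial τ R}
    (hg : ∀ i, constantCoeff (g i) = 0) (p : MvPolynomial σ R) :
    constantCoeff (bind₁ g p) = constantCoeff p := by
  induction p using MvPolynomial.induction_on with
  | C a => simp
  | add p q hp hq => simp only [map_add, hp, hq]
  | mul_X p i hp => simp only [map_mul, bind₁_X_right, hg, constantCoeff_X, mul_zero]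

end MvPolynomial

section Automorphisms

variable {R S : Type*} [CommRing R] [CommRing S] {n : ℕ}

lemma exists_linEnd_eq_of_isHomogeneous_one {p : PolyEnd R n} (hp : ∀ i, (p i).IsHomogeneous 1) :
    ∃ M : Matrix (Fin n) (Fin n) R, linEnd M = p := by
  have hspan : ∀ i, ∃ c : Fin n → R, ∑ j, c j • X j = p i := fun i => by
    rw [← Submodule.mem_span_range_iff_exists_fun, ← homogeneousSubmodule_one_eq_span_X]
    exact hp i
  choose M hM using hspan
  exact ⟨M, funext fun i => by simp only [linEnd, ← smul_eq_C_mul, hM]⟩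

lemma PolyAut.constantCoeff_inv_eq_zero (f : PolyAut R n)
    (hf : ∀ i, constantCoeff (f.val i) = 0) (i : Fin n) : constantCoeff (f.inv i) = 0 := by
  rw [← constantCoeff_bind₁_of_constantCoeff_eq_zero hf, ← PolyEnd.mul_apply, f.inv_val,
    PolyEnd.one_apply, constantCoeff_X]

lemma endMapHom_injective {φ : R →+* S} (hφ : Function.Injective φ) :
    Function.Injective (endMapHom (n := n) φ) := fun _ _ h =>
  funext fun i => map_injective φ hφ (congrFun h i)

lemma exists_autMap_eq_of_injective {φ : R →+* S} (hφ : Function.Injective φ)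
    (H : PolyAut S n) {u v : PolyEnd R n} (hu : endMapHom φ u = H.val)
    (hv : endMapHom φ v = H⁻¹.val) : ∃ G : PolyAut R n, G.val = u ∧ autMap φ G = H := by
  refine ⟨⟨u, v, endMapHom_injective hφ ?_, endMapHom_injective hφ ?_⟩, rfl, Units.ext hu⟩
  · rw [map_mul, hu, hv, H.mul_inv, map_one]
  · rw [map_mul, hu, hv, H.inv_mul, map_one]

lemma bind₁_scaleTEnd_of_isHomogeneous (m : ℤ) {d : ℕ}
    {p : MvPolynomial (Fin n) (LaurentPolynomial R)} (hp : p.IsHomogeneous d) :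
    bind₁ (scaleTEnd R n m) p = C (LaurentPolynomial.T m ^ d) * p :=
  bind₁_C_mul_X_of_isHomogeneous _ hp

lemma val_scaleT_inv_mul_mul_scaleT_apply (F : PolyAut (LaurentPolynomial R) n) (i : Fin n) :
    ((scaleT R n)⁻¹ * F * scaleT R n).val i
      = C (LaurentPolynomial.T (-1)) * bind₁ (scaleTEnd R n 1) (F.val i) := by
  change bind₁ (scaleTEnd R n 1) (bind₁ F.val (C _ * X i)) = _
  rw [map_mul, bind₁_C_right F.val, bind₁_X_right F.val, map_mul,
    bind₁_C_right (scaleTEnd R n 1)]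

end Automorphisms

section Deformation

variable {R σ : Type*} [CommRing R] {n : ℕ}

noncomputable def alexanderDeformation (e : ℕ) (p : MvPolynomial σ R) :
    MvPolynomial σ (Polynomial R) :=
  ∑ j ∈ Finset.Icc 1 e, C (Polynomial.X ^ (j - 1)) * map Polynomial.C (homogeneousComponent j p)

variable {e : ℕ}

lemma map_evalRingHom_zero_alexanderDeformation {p : MvPolynomial σ R}
    (hp : ∑ j ∈ Finset.Icc 1 e, homogeneousComponent j p = p) :
    map (Polynomial.evalRingHom 0) (alexanderDeformation e p) = homogeneousComponent 1 p := by
  have hcomp : (Polynomial.evalRingHom (0 : R)).comp Polynomial.C = RingHom.id R := by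
    ext; simp
  have hterm : ∀ j, map (Polynomial.evalRingHom 0)
      (C (Polynomial.X ^ (j - 1)) * map Polynomial.C (homogeneousComponent j p))
        = C ((0 : R) ^ (j - 1)) * homogeneousComponent j p := fun j => by
    rw [map_mul, map_C, map_map, hcomp, map_id, map_pow, Polynomial.coe_evalRingHom,
      Polynomial.eval_X]
  simp only [alexanderDeformation, map_sum, hterm]
  rcases Nat.eq_zero_or_pos e with rfl | he
  · obtain rfl : p = 0 := by simpa using hp.symm
    simp
  refine (Finset.sum_eq_single_of_mem 1 (Finset.mem_Icc.mpr ⟨le_rfl, he⟩) fun j hj hj1 => ?_).trans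
    (by simp)
  have : j - 1 ≠ 0 := by have := (Finset.mem_Icc.mp hj).1; omega
  simp [zero_pow this]

lemma map_toLaurent_alexanderDeformation {p : MvPolynomial (Fin n) R}
    (hp : ∑ j ∈ Finset.Icc 1 e, homogeneousComponent j p = p) :
    map Polynomial.toLaurent (alexanderDeformation e p)
      = C (LaurentPolynomial.T (-1)) *
          bind₁ (scaleTEnd R n 1) (map (algebraMap R (LaurentPolynomial R)) p) := by
  conv_rhs => rw [← hp]
  rw [alexanderDeformation, map_sum, map_sum, map_sum, Finset.mul_sum]
  refine Finset.sum_congr rfl fun j hj => ?_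
  have hj : 1 ≤ j := (Finset.mem_Icc.mp hj).1
  rw [bind₁_scaleTEnd_of_isHomogeneous _ ((homogeneousComponent_isHomogeneous j p).map _),
    ← mul_assoc, ← map_mul, LaurentPolynomial.T_pow, ← LaurentPolynomial.T_add, map_mul, map_C,
    map_map, Polynomial.toLaurent_X_pow]
  have hcomp : Polynomial.toLaurent.comp Polynomial.C = algebraMap R (LaurentPolynomial R) := by
    ext; simp [LaurentPolynomial.algebraMap_apply]
  rw [hcomp, show ((j - 1 : ℕ) : ℤ) = -1 + j * 1 by omega]

end Deformation

theorem alexander_trick_general {k : Type*} [Field k] {n : ℕ} (f : PolyAut k n)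
    (hfix : ∀ i : Fin n, constantCoeff (f.val i) = 0) (d : ℕ)
    (hd : ∀ i : Fin n, f.val i = ∑ j ∈ Finset.Icc 1 d, homogeneousComponent j (f.val i)) :
    ∃ G : PolyAut (Polynomial k) n,
      (∀ i : Fin n, G.val i = ∑ j ∈ Finset.Icc 1 d,
          C (Polynomial.X ^ (j - 1)) *
            MvPolynomial.map (Polynomial.C) (homogeneousComponent j (f.val i))) ∧
      autMap (Polynomial.toLaurent) G
        = (scaleT k n)⁻¹ * autMap (algebraMap k (LaurentPolynomial k)) f * scaleT k n ∧
      (specAut (0 : k) G).val = (fun i => homogeneousComponent 1 (f.val i)) ∧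
      IsLinear (specAut (0 : k) G) := by
  have hsum_inv i := sum_Icc_homogeneousComponent_of_constantCoeff_eq_zero
    (f.constantCoeff_inv_eq_zero hfix i)
  have hval : endMapHom Polynomial.toLaurent (fun i => alexanderDeformation d (f.val i))
      = ((scaleT k n)⁻¹ * autMap (algebraMap k _) f * scaleT k n).val := funext fun i => by
    rw [val_scaleT_inv_mul_mul_scaleT_apply]
    exact map_toLaurent_alexanderDeformation (hd i).symm
  have hval_inv : endMapHom Polynomial.toLaurent
      (fun i => alexanderDeformation (f.inv i).totalDegree (f.inv i))
      = ((scaleT k n)⁻¹ * autMap (algebraMap k _) f * scaleT k n)⁻¹.val := funext fun i => by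
    rw [mul_inv_rev, mul_inv_rev, inv_inv, ← mul_assoc, ← map_inv,
      val_scaleT_inv_mul_mul_scaleT_apply]
    exact map_toLaurent_alexanderDeformation (hsum_inv i)
  obtain ⟨G, hGval, hGH⟩ :=
    exists_autMap_eq_of_injective Polynomial.toLaurent_injective _ hval hval_inv
  have hspec : (specAut (0 : k) G).val = fun i => homogeneousComponent 1 (f.val i) := by
    rw [specAut, autMap, Units.coe_map, hGval]
    exact funext fun i => map_evalRingHom_zero_alexanderDeformation (hd i).symm
  refine ⟨G, fun i => by rw [hGval]; rfl, hGH, hspec, ?_⟩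
  obtain ⟨M, hM⟩ := exists_linEnd_eq_of_isHomogeneous_one fun i =>
    homogeneousComponent_isHomogeneous 1 (f.val i)
  exact ⟨M, hspec.trans hM.symm⟩

/-- **Lemma (the Alexander trick).**  If `f ∈ Aut_k(𝔸ⁿ)` fixes the origin, with homogeneous
decomposition `f_i = f_{i,1} + ⋯ + f_{i,d}`, then `g = (g_i)` with
`g_i = f_{i,1} + t f_{i,2} + ⋯ + t^{d-1} f_{i,d}` is an automorphism over `k[t]`; it equals the
conjugate `α⁻¹ ∘ f ∘ α` over `k[t,1/t]` where `α = (t x₁, …, t xₙ)`, and its specialization at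
`t = 0` is the linear part of `f`, an element of `GL_n(k)`. -/
theorem alexander_trick {k : Type*} [Field k] {n : ℕ} (hn : 1 ≤ n) (f : PolyAut k n)
    (hfix : ∀ i : Fin n, constantCoeff (f.val i) = 0) (d : ℕ)
    (hd : ∀ i : Fin n, f.val i = ∑ j ∈ Finset.Icc 1 d, homogeneousComponent j (f.val i)) :
    ∃ G : PolyAut (Polynomial k) n,
      (∀ i : Fin n, G.val i = ∑ j ∈ Finset.Icc 1 d,
          C (Polynomial.X ^ (j - 1)) *
            MvPolynomial.map (Polynomial.C) (homogeneousComponent j (f.val i))) ∧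
      autMap (Polynomial.toLaurent) G
        = (scaleT k n)⁻¹ * autMap (algebraMap k (LaurentPolynomial k)) f * scaleT k n ∧
      (specAut (0 : k) G).val = (fun i => homogeneousComponent 1 (f.val i)) ∧
      IsLinear (specAut (0 : k) G) :=
  alexander_trick_general f hfix d hd
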